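/- Let A_{k,ℓ} denote the number of up-down words of length ℓ over {1,…,k} avoiding the consecutive pattern 132, and let N_{k,ℓ} denote the number of up-down words of length ℓ over {1,…,k} avoiding the vincular pattern 1-23. Then for all k ≥ 2 and i ≥ 1, N_{k,2i+1} = A_{k,2i+1} + Σ_{j=1}^{k−1} C(k−j, 2) · A_{k−j+1, 2i−2}, where C(n,2) = n(n−1)/2. -/
import Mathlib

/-- `w` is an up-down word: `w₀ < w₁ > w₂ < w₃ > ⋯` (0-indexed). -/
def IsUpDown {l k : ℕ} (w : Fin l → Fin k) : Prop :=
  ∀ j : ℕ, ∀ h : j + 1 < l,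
    (j % 2 = 0 → w ⟨j, by omega⟩ < w ⟨j + 1, h⟩) ∧
    (j % 2 = 1 → w ⟨j + 1, h⟩ < w ⟨j, by omega⟩)

/-- `w` avoids the vincular pattern 1-23: no `a < j` with
`w a < w j < w (j+1)` (the last two letters adjacent). -/
def AvoidsV1_23 {l k : ℕ} (w : Fin l → Fin k) : Prop :=
  ∀ a j : ℕ, ∀ haj : a < j, ∀ h : j + 1 < l,
    ¬ (w ⟨a, by omega⟩ < w ⟨j, by omega⟩ ∧ w ⟨j, by omega⟩ < w ⟨j + 1, h⟩)

/-- `w` avoids the consecutive pattern 132. -/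
def AvoidsC132 {l k : ℕ} (w : Fin l → Fin k) : Prop :=
  ∀ j : ℕ, ∀ h : j + 2 < l,
    ¬ (w ⟨j, by omega⟩ < w ⟨j + 2, h⟩ ∧ w ⟨j + 2, h⟩ < w ⟨j + 1, by omega⟩)

/-- Number of up-down words of length `l` over `{1,…,k}` avoiding `⟨132⟩`. -/
noncomputable def A (k l : ℕ) : ℕ :=
  {w : Fin l → Fin k | IsUpDown w ∧ AvoidsC132 w}.ncard

/-- Number of up-down words of length `l` over `{1,…,k}` avoiding 1-23. -/
noncomputable def N123v (k l : ℕ) : ℕ :=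
  {w : Fin l → Fin k | IsUpDown w ∧ AvoidsV1_23 w}.ncard

namespace UD17

/-- troughs decreasing among indices `< m`. -/
def TD {l k : ℕ} (m : ℕ) (w : Fin l → Fin k) : Prop :=
  ∀ j : ℕ, j % 2 = 0 → j + 2 < m → ∀ hl : j + 2 < l, w ⟨j + 2, hl⟩ ≤ w ⟨j, by omega⟩

lemma wcast {l k : ℕ} (w : Fin l → Fin k) {a b : ℕ} {ha : a < l} {hb : b < l}
    (h : a = b) : w ⟨a, ha⟩ = w ⟨b, hb⟩ := by subst h; rfl

lemma trough_mono_aux {l k m : ℕ} {w : Fin l → Fin k} (htd : TD m w) :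
    ∀ (d a j : ℕ) (ha : a % 2 = 0) (hj : j = a + 2 * d) (hm : j < m) (hl : j < l),
      w ⟨j, hl⟩ ≤ w ⟨a, by omega⟩ := by
  intro d
  induction d with
  | zero =>
      intro a j ha hj hm hl
      exact le_of_eq (wcast w (by omega))
  | succ d ih =>
      intro a j ha hj hm hl
      have hj' : j = a + 2 * d + 2 := by omega
      subst hj'
      have h1 : w ⟨a + 2 * d + 2, hl⟩ ≤ w ⟨a + 2 * d, by omega⟩ :=
        htd (a + 2 * d) (by omega) (by omega) hl
      exact h1.trans (ih a (a + 2 * d) ha rfl (by omega) (by omega))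

lemma trough_mono {l k m : ℕ} {w : Fin l → Fin k} (htd : TD m w)
    (a j : ℕ) (ha : a % 2 = 0) (hj : j % 2 = 0) (haj : a ≤ j) (hm : j < m)
    (hl : j < l) : w ⟨j, hl⟩ ≤ w ⟨a, by omega⟩ :=
  trough_mono_aux htd ((j - a) / 2) a j ha (by omega) hm hl

lemma avoidsC132_iff_TD {l k : ℕ} {w : Fin l → Fin k} (hud : IsUpDown w) :
    AvoidsC132 w ↔ TD l w := by
  constructor
  · intro hA j hj h2 hl
    by_contra hc
    push_neg at hc
    refine hA j hl ⟨hc, ?_⟩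
    have h5 := (hud (j + 1) (by omega)).2 (by omega)
    exact lt_of_eq_of_lt (wcast w (by omega)) h5
  · intro htd j h
    rintro ⟨h1, h2⟩
    rcases Nat.mod_two_eq_zero_or_one j with hje | hjo
    · have := htd j hje (by omega) h
      exact absurd h1 (not_lt.2 this)
    · have := (hud j (by omega)).2 hjo
      exact absurd (h1.trans h2) (not_lt.2 this.le)

lemma avoidsV_iff_TD {l k m' : ℕ} {w : Fin l → Fin k} (hud : IsUpDown w)
    (hm : l = m' + 1) : AvoidsV1_23 w ↔ TD m' w := by
  constructor
  · intro hv j hj h2 hl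
    by_contra hc
    push_neg at hc
    refine hv j (j + 2) (by omega) (by omega) ⟨hc, ?_⟩
    exact (hud (j + 2) (by omega)).1 (by omega)
  · intro htd a j haj h
    rintro ⟨h1, h2⟩
    rcases Nat.mod_two_eq_zero_or_one j with hje | hjo
    · have key : w ⟨j, by omega⟩ ≤ w ⟨a, by omega⟩ := by
        rcases Nat.mod_two_eq_zero_or_one a with hae | hao
        · exact trough_mono htd a j hae hje haj.le (by omega) (by omega)
        · have h3 : w ⟨j, by omega⟩ ≤ w ⟨a + 1, by omega⟩ :=
            trough_mono htd (a + 1) j (by omega) hje (by omega) (by omega) (by omega)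
          have h4 := (hud a (by omega)).2 hao
          exact h3.trans h4.le
      exact absurd h1 (not_lt.2 key)
    · have := (hud j h).2 hjo
      exact absurd (h2.trans this) (lt_irrefl _)


variable {k m : ℕ}

def Pset (k m : ℕ) (t : Fin k) : Set (Fin (2 * m) → Fin k) :=
  {p | IsUpDown p ∧ TD (2 * m) p ∧ ∀ j : Fin (2 * m), t ≤ p j}

def Qset (k : ℕ) (t : Fin k) : Set (Fin k × Fin k) :=
  {bc | t < bc.2 ∧ bc.2 < bc.1}

def Dset (k m : ℕ) : Set (Fin (2 * m + 3) → Fin k) :=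
  {w | IsUpDown w ∧ TD (2 * m + 2) w ∧ w ⟨2 * m, by omega⟩ < w ⟨2 * m + 2, by omega⟩}

def Fib (k m : ℕ) (t : Fin k) : Set (Fin (2 * m + 3) → Fin k) :=
  {w | w ∈ Dset k m ∧ w ⟨2 * m, by omega⟩ = t}

def glueAux (t b c : Fin k) (p : Fin (2 * m) → Fin k) (v : ℕ) : Fin k :=
  if h : v < 2 * m then p ⟨v, h⟩
    else if v = 2 * m then t else if v = 2 * m + 1 then b else c

def glue (t b c : Fin k) (p : Fin (2 * m) → Fin k) : Fin (2 * m + 3) → Fin k :=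
  fun j => glueAux t b c p j.val

def pre (w : Fin (2 * m + 3) → Fin k) : Fin (2 * m) → Fin k :=
  fun j => w ⟨j.val, by omega⟩

lemma glue_lt {t b c : Fin k} {p : Fin (2 * m) → Fin k} {v : ℕ} (h : v < 2 * m)
    (h3 : v < 2 * m + 3) : glue t b c p ⟨v, h3⟩ = p ⟨v, h⟩ := dif_pos h

lemma glue_t {t b c : Fin k} {p : Fin (2 * m) → Fin k} (h3 : 2 * m < 2 * m + 3) :
    glue t b c p ⟨2 * m, h3⟩ = t := by
  show glueAux t b c p (2 * m) = t
  unfold glueAux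
  rw [dif_neg (by omega), if_pos rfl]

lemma glue_b {t b c : Fin k} {p : Fin (2 * m) → Fin k} (h3 : 2 * m + 1 < 2 * m + 3) :
    glue t b c p ⟨2 * m + 1, h3⟩ = b := by
  show glueAux t b c p (2 * m + 1) = b
  unfold glueAux
  rw [dif_neg (by omega), if_neg (by omega), if_pos rfl]

lemma glue_c {t b c : Fin k} {p : Fin (2 * m) → Fin k} (h3 : 2 * m + 2 < 2 * m + 3) :
    glue t b c p ⟨2 * m + 2, h3⟩ = c := by
  show glueAux t b c p (2 * m + 2) = c
  unfold glueAux
  rw [dif_neg (by omega), if_neg (by omega), if_neg (by omega)]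

lemma pre_glue (t b c : Fin k) (p : Fin (2 * m) → Fin k) :
    pre (glue t b c p) = p := by
  funext j
  have hj := j.isLt
  rw [pre, glue_lt hj]

lemma glue_pre (w : Fin (2 * m + 3) → Fin k) :
    glue (w ⟨2 * m, by omega⟩) (w ⟨2 * m + 1, by omega⟩) (w ⟨2 * m + 2, by omega⟩)
      (pre w) = w := by
  funext j
  have hj := j.isLt
  rcases lt_or_ge j.val (2 * m) with h | h
  · have hj2 : j = ⟨j.val, hj⟩ := rfl
    rw [hj2, glue_lt h]
    rfl
  · rcases (by omega : j.val = 2 * m ∨ j.val = 2 * m + 1 ∨ j.val = 2 * m + 2) with h0 | h0 | h0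
    · have hj2 : j = ⟨2 * m, by omega⟩ := Fin.ext h0
      rw [hj2, glue_t]
    · have hj2 : j = ⟨2 * m + 1, by omega⟩ := Fin.ext h0
      rw [hj2, glue_b]
    · have hj2 : j = ⟨2 * m + 2, by omega⟩ := Fin.ext h0
      rw [hj2, glue_c]

lemma glue_eval_t {t b c : Fin k} {p : Fin (2 * m) → Fin k} {v : ℕ} (hv : v = 2 * m)
    (h3 : v < 2 * m + 3) : glue t b c p ⟨v, h3⟩ = t := by subst hv; exact glue_t h3

lemma glue_eval_b {t b c : Fin k} {p : Fin (2 * m) → Fin k} {v : ℕ} (hv : v = 2 * m + 1)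
    (h3 : v < 2 * m + 3) : glue t b c p ⟨v, h3⟩ = b := by subst hv; exact glue_b h3

lemma glue_eval_c {t b c : Fin k} {p : Fin (2 * m) → Fin k} {v : ℕ} (hv : v = 2 * m + 2)
    (h3 : v < 2 * m + 3) : glue t b c p ⟨v, h3⟩ = c := by subst hv; exact glue_c h3

lemma glue_mem_fib {t b c : Fin k} {p : Fin (2 * m) → Fin k}
    (hp : p ∈ Pset k m t) (hq : (b, c) ∈ Qset k t) : glue t b c p ∈ Fib k m t := by
  obtain ⟨hp1, hp2, hp3⟩ := hp
  obtain ⟨hq1, hq2⟩ := hq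
  have hud : IsUpDown (glue t b c p) := by
    intro j h
    rcases (by omega : j + 1 < 2 * m ∨ j + 1 = 2 * m ∨ j = 2 * m ∨ j = 2 * m + 1)
      with h0 | h0 | h0 | h0
    · constructor
      · intro hpar
        rw [glue_lt (show j < 2 * m by omega), glue_lt (show j + 1 < 2 * m by omega)]
        exact (hp1 j (by omega)).1 hpar
      · intro hpar
        rw [glue_lt (show j < 2 * m by omega), glue_lt (show j + 1 < 2 * m by omega)]
        exact (hp1 j (by omega)).2 hpar
    · constructor
      · intro hpar
        exfalso; omega
      · intro hpar
        rw [glue_eval_t (show j + 1 = 2 * m by omega),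
          glue_lt (show j < 2 * m by omega)]
        have h1 : p ⟨2 * m - 2, by omega⟩ < p ⟨2 * m - 2 + 1, by omega⟩ :=
          (hp1 (2 * m - 2) (by omega)).1 (by omega)
        have h2 : t ≤ p ⟨2 * m - 2, by omega⟩ := hp3 _
        exact lt_of_lt_of_eq (lt_of_le_of_lt h2 h1) (wcast p (by omega))
    · constructor
      · intro hpar
        rw [glue_eval_t (show j = 2 * m by omega),
          glue_eval_b (show j + 1 = 2 * m + 1 by omega)]
        exact hq1.trans hq2
      · intro hpar
        exfalso; omega
    · constructor
      · intro hpar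
        exfalso; omega
      · intro hpar
        rw [glue_eval_b (show j = 2 * m + 1 by omega),
          glue_eval_c (show j + 1 = 2 * m + 2 by omega)]
        exact hq2
  have htd : TD (2 * m + 2) (glue t b c p) := by
    intro j hj h2 hl
    rcases (by omega : j + 2 < 2 * m ∨ j + 2 = 2 * m ∨ j + 2 = 2 * m + 1) with h0 | h0 | h0
    · rw [glue_lt (show j + 2 < 2 * m by omega), glue_lt (show j < 2 * m by omega)]
      exact hp2 j hj (by omega) (by omega)
    · rw [glue_eval_t (show j + 2 = 2 * m by omega), glue_lt (show j < 2 * m by omega)]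
      exact hp3 _
    · exfalso; omega
  refine ⟨⟨hud, htd, ?_⟩, glue_t _⟩
  rw [glue_t, glue_c]
  exact hq1

lemma pre_mem {t : Fin k} {w : Fin (2 * m + 3) → Fin k} (hw : w ∈ Fib k m t) :
    pre w ∈ Pset k m t := by
  obtain ⟨⟨hud, htd, hlt⟩, ht⟩ := hw
  refine ⟨?_, ?_, ?_⟩
  · intro j h
    exact ⟨fun hpar => (hud j (by omega)).1 hpar, fun hpar => (hud j (by omega)).2 hpar⟩
  · intro j hj h2 hl
    exact htd j hj (by omega) (by omega)
  · intro j
    have hjlt := j.isLt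
    rcases Nat.mod_two_eq_zero_or_one j.val with hje | hjo
    · exact ht.symm.le.trans
        (trough_mono htd j.val (2 * m) hje (by omega) (by omega) (by omega) (by omega))
    · have h1 : w ⟨2 * m, by omega⟩ ≤ w ⟨j.val + 1, by omega⟩ :=
        trough_mono htd (j.val + 1) (2 * m) (by omega) (by omega) (by omega)
          (by omega) (by omega)
      have h2 := (hud j.val (by omega)).2 hjo
      exact ht.symm.le.trans (h1.trans h2.le)

lemma pair_mem {t : Fin k} {w : Fin (2 * m + 3) → Fin k} (hw : w ∈ Fib k m t) :
    (w ⟨2 * m + 1, by omega⟩, w ⟨2 * m + 2, by omega⟩) ∈ Qset k t := by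
  obtain ⟨⟨hud, htd, hlt⟩, ht⟩ := hw
  constructor
  · exact ht.symm.le.trans_lt hlt
  · have h2 := (hud (2 * m + 1) (by omega)).2 (by omega)
    exact lt_of_eq_of_lt (wcast w (by omega)) h2

noncomputable def fibEquiv (k m : ℕ) (t : Fin k) :
    ↥(Fib k m t) ≃ ↥(Pset k m t) × ↥(Qset k t) where
  toFun w := (⟨pre w.1, pre_mem w.2⟩,
    ⟨(w.1 ⟨2 * m + 1, by omega⟩, w.1 ⟨2 * m + 2, by omega⟩), pair_mem w.2⟩)
  invFun pq := ⟨glue t pq.2.1.1 pq.2.1.2 pq.1.1, glue_mem_fib pq.1.2 pq.2.2⟩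
  left_inv w := by
    obtain ⟨w, hw⟩ := w
    have ht : w ⟨2 * m, by omega⟩ = t := hw.2
    apply Subtype.ext
    dsimp only
    show glue t (w ⟨2 * m + 1, by omega⟩) (w ⟨2 * m + 2, by omega⟩) (pre w) = w
    rw [← ht]
    exact glue_pre w
  right_inv pq := by
    obtain ⟨⟨p, hp⟩, ⟨⟨b, c⟩, hq⟩⟩ := pq
    apply Prod.ext
    · apply Subtype.ext
      exact pre_glue t b c p
    · apply Subtype.ext
      show (glue t b c p ⟨2 * m + 1, by omega⟩, glue t b c p ⟨2 * m + 2, by omega⟩) = (b, c)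
      rw [glue_b, glue_c]

lemma card_fib (k m : ℕ) (t : Fin k) :
    (Fib k m t).ncard = (Pset k m t).ncard * (Qset k t).ncard := by
  rw [← Nat.card_coe_set_eq, ← Nat.card_coe_set_eq, ← Nat.card_coe_set_eq,
    Nat.card_congr (fibEquiv k m t), Nat.card_prod]

lemma A_eq_td (k l : ℕ) : A k l = {w : Fin l → Fin k | IsUpDown w ∧ TD l w}.ncard := by
  unfold A
  congr 1
  ext w
  simp only [Set.mem_setOf_eq]
  exact ⟨fun ⟨h1, h2⟩ => ⟨h1, (avoidsC132_iff_TD h1).1 h2⟩,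
    fun ⟨h1, h2⟩ => ⟨h1, (avoidsC132_iff_TD h1).2 h2⟩⟩

def shiftUp (k m : ℕ) (t : Fin k) (w : Fin (2 * m) → Fin (k - t.val)) :
    Fin (2 * m) → Fin k :=
  fun j => ⟨(w j).val + t.val, by have := (w j).isLt; omega⟩

lemma card_Pset (k m : ℕ) (t : Fin k) :
    (Pset k m t).ncard = A (k - t.val) (2 * m) := by
  rw [A_eq_td]
  have hinj : Function.Injective (shiftUp k m t) := by
    intro u v h
    funext j
    have h2 : (u j).val + t.val = (v j).val + t.val :=
      congrArg Fin.val (congrFun h j)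
    exact Fin.ext (by omega)
  have himg : shiftUp k m t '' {w | IsUpDown w ∧ TD (2 * m) w} = Pset k m t := by
    apply Set.Subset.antisymm
    · rintro _ ⟨w, ⟨hud, htd⟩, rfl⟩
      refine ⟨?_, ?_, ?_⟩
      · intro j h
        constructor
        · intro hpar
          have h1 := (hud j h).1 hpar
          rw [Fin.lt_def] at h1
          simp only [shiftUp, Fin.lt_def]
          omega
        · intro hpar
          have h1 := (hud j h).2 hpar
          rw [Fin.lt_def] at h1
          simp only [shiftUp, Fin.lt_def]
          omega
      · intro j hj h2 hl
        have h1 := htd j hj h2 hl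
        rw [Fin.le_def] at h1
        simp only [shiftUp, Fin.le_def]
        omega
      · intro j
        simp only [shiftUp, Fin.le_def]
        omega
    · intro p hp
      obtain ⟨hud, htd, hall⟩ := hp
      have hb : ∀ j : Fin (2 * m), (p j).val - t.val < k - t.val := by
        intro j
        have := (p j).isLt
        have := t.isLt
        omega
      refine ⟨fun j => ⟨(p j).val - t.val, hb j⟩, ⟨?_, ?_⟩, ?_⟩
      · intro j h
        have ha1 : t.val ≤ (p ⟨j, by omega⟩).val := Fin.le_def.1 (hall ⟨j, by omega⟩)
        have ha2 : t.val ≤ (p ⟨j + 1, h⟩).val := Fin.le_def.1 (hall ⟨j + 1, h⟩)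
        constructor
        · intro hpar
          have h1 := Fin.lt_def.1 ((hud j h).1 hpar)
          simp only [Fin.lt_def]
          omega
        · intro hpar
          have h1 := Fin.lt_def.1 ((hud j h).2 hpar)
          simp only [Fin.lt_def]
          omega
      · intro j hj h2 hl
        have ha1 : t.val ≤ (p ⟨j, by omega⟩).val := Fin.le_def.1 (hall ⟨j, by omega⟩)
        have h1 := Fin.le_def.1 (htd j hj h2 hl)
        simp only [Fin.le_def]
        omega
      · funext j
        apply Fin.ext
        have ha1 : t.val ≤ (p j).val := Fin.le_def.1 (hall j)
        show (p j).val - t.val + t.val = (p j).val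
        omega
  rw [← himg, Set.ncard_image_of_injective _ hinj]

lemma sum_aux (T n : ℕ) : ∑ x ∈ Finset.range n, (x - T - 1) = (n - 1 - T).choose 2 := by
  induction n with
  | zero => simp
  | succ n ih =>
      rw [Finset.sum_range_succ, ih, show n + 1 - 1 - T = n - T from by omega]
      rcases le_or_gt n T with h | h
      · rw [show n - 1 - T = 0 from by omega, show n - T - 1 = 0 from by omega]
        rcases (by omega : n - T = 0 ∨ n - T = 1) with h0 | h0 <;> simp [h0]
      · obtain ⟨a, ha1, ha2, ha3⟩ : ∃ a, n - 1 - T = a ∧ n - T = a + 1 ∧ n - T - 1 = a :=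
          ⟨n - 1 - T, rfl, by omega, by omega⟩
        rw [ha1, ha2, show (a + 1).choose 2 = a.choose 1 + a.choose 2 from
          Nat.choose_succ_succ a 1, Nat.choose_one_right]
        omega

lemma card_Qset (k : ℕ) (t : Fin k) : (Qset k t).ncard = (k - 1 - t.val).choose 2 := by
  classical
  have h1 : Qset k t
      = ↑(Finset.univ.filter (fun bc : Fin k × Fin k => t < bc.2 ∧ bc.2 < bc.1)) := by
    ext bc
    simp [Qset]
  rw [h1, Set.ncard_coe_finset,
    Finset.card_eq_sum_card_fiberwise (f := fun bc : Fin k × Fin k => bc.1)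
      (t := Finset.univ) (fun x _ => Finset.mem_univ _)]
  have h2 : ∀ b : Fin k,
      ((Finset.univ.filter (fun bc : Fin k × Fin k => t < bc.2 ∧ bc.2 < bc.1)).filter
        (fun bc => bc.1 = b)).card = b.val - t.val - 1 := by
    intro b
    rw [← Fin.card_Ioo t b]
    refine Finset.card_bij' (fun bc _ => bc.2) (fun c _ => (b, c)) ?_ ?_ ?_ ?_
    · intro bc hbc
      simp only [Finset.mem_filter, Finset.mem_univ, true_and] at hbc
      rw [Finset.mem_Ioo]
      exact ⟨hbc.1.1, hbc.2 ▸ hbc.1.2⟩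
    · intro c hc
      rw [Finset.mem_Ioo] at hc
      simp only [Finset.mem_filter, Finset.mem_univ, true_and]
      exact ⟨⟨hc.1, hc.2⟩, by simp⟩
    · intro bc hbc
      simp only [Finset.mem_filter, Finset.mem_univ, true_and] at hbc
      obtain ⟨bc1, bc2⟩ := bc
      dsimp only
      rw [show bc1 = b from hbc.2]
    · intro c hc
      rfl
  rw [Finset.sum_congr rfl (fun b _ => h2 b), ← sum_aux t.val k]
  exact Fin.sum_univ_eq_sum_range (fun x => x - t.val - 1) k

lemma card_Dset (k m : ℕ) :
    (Dset k m).ncard = ∑ t : Fin k, (k - 1 - t.val).choose 2 * A (k - t.val) (2 * m) := by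
  classical
  have hfin : (Dset k m).Finite := Set.toFinite _
  rw [Set.ncard_eq_toFinset_card (Dset k m) hfin,
    Finset.card_eq_sum_card_fiberwise
      (f := fun w : Fin (2 * m + 3) → Fin k => w ⟨2 * m, by omega⟩)
      (t := Finset.univ) (fun x _ => Finset.mem_univ _)]
  refine Finset.sum_congr rfl (fun t _ => ?_)
  have hft : (Fib k m t).Finite := Set.toFinite _
  have hfilter : hfin.toFinset.filter
      (fun w : Fin (2 * m + 3) → Fin k => w ⟨2 * m, by omega⟩ = t) = hft.toFinset := by
    ext w
    simp only [Finset.mem_filter, Set.Finite.mem_toFinset]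
    exact Iff.rfl
  rw [hfilter, ← Set.ncard_eq_toFinset_card (Fib k m t) hft, card_fib, card_Pset,
    card_Qset, mul_comm]

lemma sum_reindex (k m : ℕ) (hk : 1 ≤ k) :
    ∑ t : Fin k, (k - 1 - t.val).choose 2 * A (k - t.val) (2 * m)
      = ∑ j ∈ Finset.Icc 1 (k - 1), Nat.choose (k - j) 2 * A (k - j + 1) (2 * m) := by
  have h0 : ∑ t : Fin k, (k - 1 - t.val).choose 2 * A (k - t.val) (2 * m)
      = ∑ x ∈ Finset.range k, (k - 1 - x).choose 2 * A (k - x) (2 * m) :=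
    Fin.sum_univ_eq_sum_range (fun x => (k - 1 - x).choose 2 * A (k - x) (2 * m)) k
  rw [h0]
  obtain ⟨K, rfl⟩ : ∃ K, k = K + 1 := ⟨k - 1, by omega⟩
  rw [Finset.sum_range_succ, show (K + 1 - 1 - K).choose 2 * A (K + 1 - K) (2 * m) = 0
    from by rw [show K + 1 - 1 - K = 0 from by omega]; simp [Nat.choose], add_zero,
    show K + 1 - 1 = K from rfl]
  refine Finset.sum_bij' (fun (x : ℕ) _ => x + 1) (fun (j : ℕ) _ => j - 1) ?_ ?_ ?_ ?_ ?_
  · intro x hx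
    rw [Finset.mem_range] at hx
    rw [Finset.mem_Icc]
    show 1 ≤ x + 1 ∧ x + 1 ≤ K
    omega
  · intro j hj
    rw [Finset.mem_Icc] at hj
    rw [Finset.mem_range]
    show j - 1 < K
    omega
  · intro x hx
    show x + 1 - 1 = x
    omega
  · intro j hj
    rw [Finset.mem_Icc] at hj
    show j - 1 + 1 = j
    omega
  · intro x hx
    rw [Finset.mem_range] at hx
    show (K - x).choose 2 * A (K + 1 - x) (2 * m)
      = (K + 1 - (x + 1)).choose 2 * A (K + 1 - (x + 1) + 1) (2 * m)
    rw [show K + 1 - (x + 1) = K - x from by omega,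
      show K - x + 1 = K + 1 - x from by omega]

end UD17

/-- For `k ≥ 2`, `i ≥ 1`:
`N_{k,2i+1} = A_{k,2i+1} + Σ_{j=1}^{k−1} C(k−j,2)·A_{k−j+1,2i−2}`. -/
theorem stmt_17 (k i : ℕ) (hk : 2 ≤ k) (hi : 1 ≤ i) :
    N123v k (2 * i + 1) =
      A k (2 * i + 1) +
        ∑ j ∈ Finset.Icc 1 (k - 1), Nat.choose (k - j) 2 * A (k - j + 1) (2 * i - 2) := by
  obtain ⟨m, rfl⟩ : ∃ m, i = m + 1 := ⟨i - 1, by omega⟩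
  rw [show 2 * (m + 1) + 1 = 2 * m + 3 from by ring,
    show 2 * (m + 1) - 2 = 2 * m from by omega]
  have hsub : {w : Fin (2 * m + 3) → Fin k | IsUpDown w ∧ UD17.TD (2 * m + 3) w}
      ⊆ {w | IsUpDown w ∧ UD17.TD (2 * m + 2) w} := by
    rintro w ⟨h1, h2⟩
    exact ⟨h1, fun j hj hlt hl => h2 j hj (by omega) hl⟩
  have hdiff : {w : Fin (2 * m + 3) → Fin k | IsUpDown w ∧ UD17.TD (2 * m + 2) w}
      \ {w | IsUpDown w ∧ UD17.TD (2 * m + 3) w} = UD17.Dset k m := by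
    ext w
    simp only [Set.mem_diff, Set.mem_setOf_eq, UD17.Dset]
    constructor
    · rintro ⟨⟨h1, h2⟩, h3⟩
      refine ⟨h1, h2, ?_⟩
      by_contra hc
      push_neg at hc
      refine h3 ⟨h1, ?_⟩
      intro j hj h2' hl
      rcases (by omega : j + 2 < 2 * m + 2 ∨ j + 2 = 2 * m + 2) with h0 | h0
      · exact h2 j hj h0 hl
      · have hj2 : j = 2 * m := by omega
        subst hj2
        exact hc
    · rintro ⟨h1, h2, h3⟩
      refine ⟨⟨h1, h2⟩, ?_⟩
      rintro ⟨-, h4⟩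
      have := h4 (2 * m) (by omega) (by omega) (by omega)
      exact absurd h3 (not_lt.2 this)
  have key := Set.ncard_diff_add_ncard_of_subset hsub (Set.toFinite _)
  rw [hdiff] at key
  have hN : N123v k (2 * m + 3)
      = {w : Fin (2 * m + 3) → Fin k | IsUpDown w ∧ UD17.TD (2 * m + 2) w}.ncard := by
    unfold N123v
    congr 1
    ext w
    simp only [Set.mem_setOf_eq]
    exact ⟨fun ⟨h1, h2⟩ => ⟨h1, (UD17.avoidsV_iff_TD h1 (by ring)).1 h2⟩,
      fun ⟨h1, h2⟩ => ⟨h1, (UD17.avoidsV_iff_TD h1 (by ring)).2 h2⟩⟩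
  rw [hN, UD17.A_eq_td k (2 * m + 3), ← key, UD17.card_Dset k m,
    UD17.sum_reindex k m (by omega)]
  exact Nat.add_comm _ _
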